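/- arXiv:2012.09848 — 2 statements merged into one kernel-verified Lean document; each statement's English description precedes it below -/
import Mathlib

section
/- Let (X,d) be a proper geodesic metric space which is δ-hyperbolic for some δ ≥ 0 and has approaching geodesics, i.e. any two asymptotic geodesic rays are strongly asymptotic. Let p ∈ X and let (w_n) be a sequence in X with d(w_n,p) → ∞ such that the functions x ↦ d(x,w_n) − d(w_n,p) converge pointwise on X to a function h : X → ℝ. Then there exists a geodesic ray γ with γ(0) = p such that h(x) = B_γ(x,p) for all x ∈ X (every horofunction is a Busemann function). -/
/-!
Pass to an ultrafilter `U` finer than `atTop`. Since `X` is proper, geodesic segments from any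
base point `x` to `w n` converge pointwise along `U` to a geodesic ray from `x`, and the
horofunction `h` decreases with unit speed along such a ray. By hyperbolicity the limit rays `γ`
from `p` and `ρ` from `x` are asymptotic, hence strongly asymptotic: `γ (t + T)` and `ρ (t + S)`
approach each other. Since `h` is `1`-Lipschitz, comparing its values along the two rays gives
`h x = S - T`, and the same comparison of distances shows that the Busemann function of `γ`
at `x` is `S - T` as well.
-/

open Filter Metric Topology

/-- A geodesic ray: `d(γ s, γ t) = |s - t|` for all `s, t ≥ 0`. -/
def IsGeodesicRay {X : Type*} [MetricSpace X] (γ : ℝ → X) : Prop :=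
  ∀ s t : ℝ, 0 ≤ s → 0 ≤ t → dist (γ s) (γ t) = |s - t|

/-- A geodesic metric space: any two points are joined by a geodesic segment. -/
def IsGeodesicSpace (X : Type*) [MetricSpace X] : Prop :=
  ∀ x y : X, ∃ γ : ℝ → X, γ 0 = x ∧ γ (dist x y) = y ∧
    ∀ s ∈ Set.Icc (0 : ℝ) (dist x y), ∀ t ∈ Set.Icc (0 : ℝ) (dist x y),
      dist (γ s) (γ t) = |s - t|

/-- The Gromov product `(x|y)_p = (d(x,p) + d(y,p) - d(x,y))/2`. -/
noncomputable def gromovProduct {X : Type*} [MetricSpace X] (p x y : X) : ℝ :=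
  (dist x p + dist y p - dist x y) / 2

/-- `δ`-hyperbolicity: `(x|y)_p ≥ min((x|z)_p, (z|y)_p) - δ` for all `x, y, z, p`. -/
def IsDeltaHyperbolic (X : Type*) [MetricSpace X] (δ : ℝ) : Prop :=
  ∀ p x y z : X, min (gromovProduct p x z) (gromovProduct p z y) - δ ≤ gromovProduct p x y

/-- Two geodesic rays are strongly asymptotic if `d(γ(t+T), σ(t+S)) → 0` for
some `T, S ≥ 0`. -/
def StronglyAsymptotic {X : Type*} [MetricSpace X] (γ σ : ℝ → X) : Prop :=
  ∃ T S : ℝ, 0 ≤ T ∧ 0 ≤ S ∧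
    Tendsto (fun t => dist (γ (t + T)) (σ (t + S))) atTop (nhds 0)

/-- Two geodesic rays are asymptotic if `sup_{t ≥ 0} d(γ t, σ t) < ∞`. -/
def AsymptoticRays {X : Type*} [MetricSpace X] (γ σ : ℝ → X) : Prop :=
  ∃ M : ℝ, ∀ t : ℝ, 0 ≤ t → dist (γ t) (σ t) ≤ M

/-- A space has approaching geodesics if asymptotic geodesic rays are strongly
asymptotic. -/
def ApproachingGeodesics (X : Type*) [MetricSpace X] : Prop :=
  ∀ γ σ : ℝ → X, IsGeodesicRay γ → IsGeodesicRay σ →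
    AsymptoticRays γ σ → StronglyAsymptotic γ σ

/-- The geodesic region of radius `R` around the ray `γ`. -/
def geodesicRegion {X : Type*} [MetricSpace X] (γ : ℝ → X) (R : ℝ) : Set X :=
  {x | ∃ t : ℝ, 0 ≤ t ∧ dist x (γ t) < R}

section

variable {X : Type*} [MetricSpace X]

lemma IsGeodesicRay.dist_zero_apply {γ : ℝ → X} (hγ : IsGeodesicRay γ) {t : ℝ} (ht : 0 ≤ t) :
    dist (γ 0) (γ t) = t := by
  rw [hγ 0 t le_rfl ht, zero_sub, abs_neg, abs_of_nonneg ht]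

lemma IsDeltaHyperbolic.nonneg {δ : ℝ} (hX : IsDeltaHyperbolic X δ) (p : X) : 0 ≤ δ := by
  simpa [gromovProduct] using hX p p p p

/-- The hypotheses say that `y` lies on a geodesic from `p` to `w` and `z` on one from `x` to `w`,
both at distance `t` from their starting points. -/
lemma IsDeltaHyperbolic.dist_le_of_between {δ : ℝ} (hX : IsDeltaHyperbolic X δ)
    {p x w y z : X} {t : ℝ} (hpy : dist p y = t) (hyw : dist y w = dist p w - t)
    (hxz : dist x z = t) (hzw : dist z w = dist x w - t) :
    dist y z ≤ dist p x + 4 * δ := by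
  have hδ := hX.nonneg p
  have ht : 0 ≤ t := hpy ▸ dist_nonneg
  have hgyp : gromovProduct w y p = dist p w - t := by
    rw [gromovProduct, hyw, dist_comm y p, hpy]; ring
  have hgxz : gromovProduct w x z = dist x w - t := by
    rw [gromovProduct, hzw, hxz]; ring
  have hx := dist_triangle x p w
  have hp := dist_triangle p x w
  rw [dist_comm x p] at hx
  have hpz : (dist p w + dist x w - 2 * t - dist p x) / 2 - δ ≤ gromovProduct w p z := by
    refine (sub_le_sub_right (le_min ?_ ?_) δ).trans (hX w p z x)
    · rw [gromovProduct]; linarith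
    · rw [hgxz]; linarith
  have hyz : (dist p w + dist x w - 2 * t - dist p x) / 2 - 2 * δ ≤ gromovProduct w y z := by
    have hmin : (dist p w + dist x w - 2 * t - dist p x) / 2 - δ ≤
        min (gromovProduct w y p) (gromovProduct w p z) :=
      le_min (by rw [hgyp]; linarith) hpz
    linarith [hX w y z p]
  rw [gromovProduct, hyw, hzw] at hyz
  linarith

/-- `ρ` is a pointwise limit along `l` of points on geodesics from `x` to `w n`. -/
structure IsRayLimit (l : Filter ℕ) (x : X) (w : ℕ → X) (ρ : ℝ → X) : Prop where
  isGeodesicRay : IsGeodesicRay ρ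
  apply_zero : ρ 0 = x
  exists_tendsto : ∀ t, 0 ≤ t → ∃ y : ℕ → X, Tendsto y l (𝓝 (ρ t)) ∧
    ∀ᶠ n in l, dist x (y n) = t ∧ dist (y n) (w n) = dist x (w n) - t

lemma Ultrafilter.exists_tendsto_of_eventually_mem_closedBall [ProperSpace X] {ι : Type*}
    (U : Ultrafilter ι) {u : ι → X} {x : X} {r : ℝ} (hu : ∀ᶠ n in U, u n ∈ closedBall x r) :
    ∃ a, Tendsto u U (𝓝 a) := by
  obtain ⟨a, -, ha⟩ := (isCompact_closedBall x r).ultrafilter_le_nhds (U.map u)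
    (by rwa [Ultrafilter.coe_map, le_principal_iff])
  exact ⟨a, by rwa [Ultrafilter.coe_map] at ha⟩

lemma exists_isRayLimit [ProperSpace X] (hX : IsGeodesicSpace X) (U : Ultrafilter ℕ) (x : X)
    {w : ℕ → X} (hw : Tendsto (fun n => dist x (w n)) U atTop) :
    ∃ ρ, IsRayLimit U x w ρ := by
  choose g hg0 hgw hg using fun n => hX x (w n)
  have hseg : ∀ s t, 0 ≤ s → 0 ≤ t → ∀ᶠ n in U, dist (g n s) (g n t) = |s - t| := fun s t hs ht =>
    (hw.eventually_ge_atTop (max s t)).mono fun n hn =>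
      hg n s ⟨hs, (le_max_left s t).trans hn⟩ t ⟨ht, (le_max_right s t).trans hn⟩
  have hbetween : ∀ t, 0 ≤ t → ∀ᶠ n in U, dist x (g n t) = t ∧
      dist (g n t) (w n) = dist x (w n) - t := fun t ht =>
    (hw.eventually_ge_atTop t).mono fun n hn => by
      have hx := hg n 0 ⟨le_rfl, dist_nonneg⟩ t ⟨ht, hn⟩
      have hwn := hg n t ⟨ht, hn⟩ _ ⟨dist_nonneg, le_rfl⟩
      rw [hg0] at hx
      rw [hgw] at hwn
      exact ⟨by rw [hx, zero_sub, abs_neg, abs_of_nonneg ht],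
        by rw [hwn, abs_sub_comm, abs_of_nonneg (sub_nonneg.2 hn)]⟩
  have hlim : ∀ t, ∃ a, 0 ≤ t → Tendsto (fun n => g n t) U (𝓝 a) := by
    intro t
    by_cases ht : 0 ≤ t
    · obtain ⟨a, ha⟩ := U.exists_tendsto_of_eventually_mem_closedBall
        ((hbetween t ht).mono fun n hn => mem_closedBall'.2 hn.1.le)
      exact ⟨a, fun _ => ha⟩
    · exact ⟨x, fun h => absurd h ht⟩
  choose ρ hρ using hlim
  refine ⟨ρ, ⟨fun s t hs ht => ?_, ?_, fun t ht => ⟨_, hρ t ht, hbetween t ht⟩⟩⟩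
  · exact tendsto_nhds_unique ((hρ s hs).dist (hρ t ht))
      (tendsto_const_nhds.congr' ((hseg s t hs ht).mono fun n hn => hn.symm))
  · exact tendsto_nhds_unique (hρ 0 le_rfl) (by simp only [hg0]; exact tendsto_const_nhds)

section Horofunction

variable {l : Filter ℕ} [l.NeBot] {p : X} {w : ℕ → X} {h : X → ℝ}

lemma lipschitzWith_one_of_tendsto_dist_sub
    (hh : ∀ y, Tendsto (fun n => dist y (w n) - dist (w n) p) l (𝓝 (h y))) : LipschitzWith 1 h :=
  LipschitzWith.of_le_add fun a b => le_of_tendsto_of_tendsto (hh a) ((hh b).add_const (dist a b))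
    (Eventually.of_forall fun n => by linarith [dist_triangle a b (w n)])

lemma IsRayLimit.apply_eq {x : X} {ρ : ℝ → X} (hρ : IsRayLimit l x w ρ)
    (hh : ∀ y, Tendsto (fun n => dist y (w n) - dist (w n) p) l (𝓝 (h y))) {t : ℝ} (ht : 0 ≤ t) :
    h (ρ t) = h x - t := by
  obtain ⟨z, hz, hzw⟩ := hρ.exists_tendsto t ht
  refine le_antisymm ?_ ?_
  · have hlim : Tendsto (fun n => dist (ρ t) (z n) + (dist x (w n) - dist (w n) p) - t) l
        (𝓝 (h x - t)) := by
      simpa using ((tendsto_const_nhds (x := ρ t)).dist hz |>.add (hh x)).sub_const t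
    refine le_of_tendsto_of_tendsto (hh (ρ t)) hlim ?_
    filter_upwards [hzw] with n hn
    linarith [dist_triangle (ρ t) (z n) (w n)]
  · have hxρ : dist x (ρ t) = t := hρ.apply_zero ▸ hρ.isGeodesicRay.dist_zero_apply ht
    have := (lipschitzWith_one_of_tendsto_dist_sub hh).le_add_mul x (ρ t)
    rw [hxρ, NNReal.coe_one, one_mul] at this
    linarith

lemma IsRayLimit.asymptoticRays {δ : ℝ} (hX : IsDeltaHyperbolic X δ) {x : X} {γ ρ : ℝ → X}
    (hγ : IsRayLimit l p w γ) (hρ : IsRayLimit l x w ρ) : AsymptoticRays γ ρ := by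
  refine ⟨dist p x + 4 * δ, fun t ht => ?_⟩
  obtain ⟨y, hy, hyw⟩ := hγ.exists_tendsto t ht
  obtain ⟨z, hz, hzw⟩ := hρ.exists_tendsto t ht
  refine le_of_tendsto (hy.dist hz) ?_
  filter_upwards [hyw, hzw] with n hyn hzn
  exact hX.dist_le_of_between hyn.1 hyn.2 hzn.1 hzn.2

end Horofunction

lemma sub_eq_sub_of_tendsto_dist {f : X → ℝ} (hf : LipschitzWith 1 f) {γ ρ : ℝ → X}
    {a b T S : ℝ} (hγ : ∀ t, 0 ≤ t → f (γ t) = a - t) (hρ : ∀ t, 0 ≤ t → f (ρ t) = b - t)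
    (hT : 0 ≤ T) (hS : 0 ≤ S)
    (hTS : Tendsto (fun t => dist (γ (t + T)) (ρ (t + S))) atTop (𝓝 0)) :
    a - T = b - S := by
  have hle : ∀ᶠ t in atTop, |(a - T) - (b - S)| ≤ dist (γ (t + T)) (ρ (t + S)) := by
    filter_upwards [eventually_ge_atTop 0] with t ht
    have := hf.dist_le_mul (γ (t + T)) (ρ (t + S))
    rw [Real.dist_eq, hγ _ (by linarith), hρ _ (by linarith), NNReal.coe_one, one_mul] at this
    convert this using 2
    ring
  exact sub_eq_zero.1 (abs_nonpos_iff.1 (ge_of_tendsto hTS hle))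

lemma tendsto_dist_sub_dist_of_tendsto_dist {γ ρ : ℝ → X} (hγ : IsGeodesicRay γ)
    (hρ : IsGeodesicRay ρ) {T S : ℝ} (hT : 0 ≤ T) (hS : 0 ≤ S)
    (hTS : Tendsto (fun t => dist (γ (t + T)) (ρ (t + S))) atTop (𝓝 0)) :
    Tendsto (fun t => dist (ρ 0) (γ t) - dist (γ t) (γ 0)) atTop (𝓝 (S - T)) := by
  have hshift : Tendsto (fun t => dist (ρ 0) (γ (t + T)) - dist (γ (t + T)) (γ 0)) atTop
      (𝓝 (S - T)) := by
    rw [tendsto_iff_dist_tendsto_zero]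
    refine squeeze_zero' (Eventually.of_forall fun _ => dist_nonneg) ?_ hTS
    filter_upwards [eventually_ge_atTop 0] with t ht
    rw [Real.dist_eq, dist_comm (γ _), hγ.dist_zero_apply (by linarith)]
    calc |dist (ρ 0) (γ (t + T)) - (t + T) - (S - T)|
        = |dist (γ (t + T)) (ρ 0) - dist (ρ (t + S)) (ρ 0)| := by
          rw [dist_comm (ρ (t + S)), hρ.dist_zero_apply (by linarith), dist_comm]
          ring_nf
      _ ≤ dist (γ (t + T)) (ρ (t + S)) := abs_dist_sub_le _ _ _
  simpa [Function.comp_def] using hshift.comp (tendsto_atTop_add_const_right _ (-T) tendsto_id)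

end

theorem horofunction_is_busemann_general {X : Type*} [MetricSpace X] [ProperSpace X]
    (hX : IsGeodesicSpace X)
    (δ : ℝ) (hhyp : IsDeltaHyperbolic X δ)
    (happ : ApproachingGeodesics X)
    (p : X) (w : ℕ → X)
    (hw : Tendsto (fun n => dist (w n) p) atTop atTop)
    (h : X → ℝ)
    (hconv : ∀ x : X, Tendsto (fun n => dist x (w n) - dist (w n) p) atTop (nhds (h x))) :
    ∃ γ : ℝ → X, IsGeodesicRay γ ∧ γ 0 = p ∧
      ∀ x : X, Tendsto (fun t => dist x (γ t) - dist (γ t) p) atTop (nhds (h x)) := by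
  let U : Ultrafilter ℕ := .of atTop
  have hU : (U : Filter ℕ) ≤ atTop := Ultrafilter.of_le atTop
  have hwU : ∀ x, Tendsto (fun n => dist x (w n)) U atTop := fun x =>
    ((tendsto_dist_left_atTop_iff x).2 ((tendsto_dist_right_atTop_iff p).1 hw)).mono_left hU
  have hconvU : ∀ x, Tendsto (fun n => dist x (w n) - dist (w n) p) U (𝓝 (h x)) :=
    fun x => (hconv x).mono_left hU
  have hp : h p = 0 := tendsto_nhds_unique (hconv p) (by simp [dist_comm])
  obtain ⟨γ, hγ⟩ := exists_isRayLimit hX U p (hwU p)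
  refine ⟨γ, hγ.isGeodesicRay, hγ.apply_zero, fun x => ?_⟩
  obtain ⟨ρ, hρ⟩ := exists_isRayLimit hX U x (hwU x)
  obtain ⟨T, S, hT, hS, hTS⟩ :=
    happ γ ρ hγ.isGeodesicRay hρ.isGeodesicRay (hγ.asymptoticRays hhyp hρ)
  have hx : h p - T = h x - S := sub_eq_sub_of_tendsto_dist
    (lipschitzWith_one_of_tendsto_dist_sub hconvU) (fun _ => hγ.apply_eq hconvU)
    (fun _ => hρ.apply_eq hconvU) hT hS hTS
  rw [show h x = S - T by linarith]
  simpa only [hγ.apply_zero, hρ.apply_zero] using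
    tendsto_dist_sub_dist_of_tendsto_dist hγ.isGeodesicRay hρ.isGeodesicRay hT hS hTS

/-- In a proper geodesic δ-hyperbolic space with approaching
geodesics, every horofunction (vanishing at p) is a Busemann function of some
geodesic ray starting at p. -/
theorem horofunction_is_busemann {X : Type*} [MetricSpace X] [ProperSpace X]
    (hX : IsGeodesicSpace X)
    (δ : ℝ) (hδ : 0 ≤ δ) (hhyp : IsDeltaHyperbolic X δ)
    (happ : ApproachingGeodesics X)
    (p : X) (w : ℕ → X)
    (hw : Tendsto (fun n => dist (w n) p) atTop atTop)
    (h : X → ℝ)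
    (hconv : ∀ x : X, Tendsto (fun n => dist x (w n) - dist (w n) p) atTop (nhds (h x))) :
    ∃ γ : ℝ → X, IsGeodesicRay γ ∧ γ 0 = p ∧
      ∀ x : X, Tendsto (fun t => dist x (γ t) - dist (γ t) p) atTop (nhds (h x)) :=
  horofunction_is_busemann_general hX δ hhyp happ p w hw h hconv
end

section
/- Let (X,d) be a proper geodesic metric space which is δ-hyperbolic for some δ ≥ 0. Let γ : [0,∞) → X be a geodesic ray and let σ : [0,∞) → X be a (1,B) quasi-geodesic ray for some B ≥ 0, i.e. |t−s| − B ≤ d(σ(t),σ(s)) ≤ |t−s| + B for all s,t ≥ 0. Assume that σ(t) converges to the boundary point of γ, in the sense that (σ(t) | γ(s))_{γ(0)} → ∞ as s,t → ∞ (for every C > 0 there is T such that (σ(t)|γ(s))_{γ(0)} ≥ C whenever s,t ≥ T). Then there exists M > 0 such that d(γ(t), σ(t)) < M for all t ≥ 0. -/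
open Filter Metric Topology

/-
Put `p = γ 0` and `a = d(σ 0, p)`, so that `d(σ t, p)` is within `a + B` of `t`. For `t ≤ t'`
the rough-geodesic inequalities give `(σ t | σ t')_p ≳ t`, and by the convergence hypothesis
`(σ t' | γ s)_p ≳ t` once `s, t'` are large; one application of hyperbolicity yields
`g = (σ t | γ s)_p ≳ t`, a second one puts `σ t` near `γ g`, and `d(γ g, γ t) = |g - t|` is
bounded because `t ≲ g ≤ d(σ t, p) ≲ t`.
-/

/-- `(1, B)` quasi-geodesic rays, also called `B`-rough geodesic rays. -/
def IsRoughGeodesicRay {X : Type*} [MetricSpace X] (B : ℝ) (σ : ℝ → X) : Prop :=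
  ∀ s t : ℝ, 0 ≤ s → 0 ≤ t →
    |t - s| - B ≤ dist (σ t) (σ s) ∧ dist (σ t) (σ s) ≤ |t - s| + B

def TendstoBoundaryPoint {X : Type*} [MetricSpace X] (γ σ : ℝ → X) : Prop :=
  ∀ C > (0 : ℝ), ∃ T : ℝ, ∀ s t : ℝ, T ≤ s → T ≤ t → C ≤ gromovProduct (γ 0) (σ t) (γ s)

section

variable {X : Type*} [MetricSpace X]

lemma gromovProduct_nonneg (p x y : X) : 0 ≤ gromovProduct p x y := by
  have := dist_triangle x p y
  rw [dist_comm p y] at this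
  unfold gromovProduct
  linarith

lemma gromovProduct_le_dist (p x y : X) : gromovProduct p x y ≤ dist x p := by
  have := dist_triangle y x p
  rw [dist_comm y x] at this
  unfold gromovProduct
  linarith

namespace IsGeodesicRay

variable {γ : ℝ → X}

lemma dist_zero (hγ : IsGeodesicRay γ) {u : ℝ} (hu : 0 ≤ u) : dist (γ u) (γ 0) = u := by
  rw [hγ u 0 hu le_rfl, sub_zero, abs_of_nonneg hu]

lemma gromovProduct_eq (hγ : IsGeodesicRay γ) {s u : ℝ} (hu : 0 ≤ u) (hus : u ≤ s) :
    gromovProduct (γ 0) (γ s) (γ u) = u := by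
  unfold gromovProduct
  rw [hγ.dist_zero (hu.trans hus), hγ.dist_zero hu, hγ s u (hu.trans hus) hu,
    abs_of_nonneg (sub_nonneg.mpr hus)]
  ring

/-- Up to `2δ`, the point `γ u` lies on a geodesic from `γ 0` to `x`. -/
lemma dist_le_of_le_gromovProduct {δ : ℝ} (hhyp : IsDeltaHyperbolic X δ)
    (hγ : IsGeodesicRay γ) (x : X) {s u : ℝ} (hu : 0 ≤ u) (hus : u ≤ s)
    (hux : u ≤ gromovProduct (γ 0) x (γ s)) :
    dist x (γ u) ≤ dist x (γ 0) - u + 2 * δ := by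
  have key := hhyp (γ 0) x (γ u) (γ s)
  rw [hγ.gromovProduct_eq hu hus, min_eq_right hux] at key
  unfold gromovProduct at key
  rw [hγ.dist_zero hu] at key
  linarith

end IsGeodesicRay

namespace IsRoughGeodesicRay

variable {B : ℝ} {σ : ℝ → X}

lemma abs_dist_sub_le (hσ : IsRoughGeodesicRay B σ) (p : X) {t : ℝ} (ht : 0 ≤ t) :
    |dist (σ t) p - t| ≤ B + dist (σ 0) p := by
  obtain ⟨hlow, hupp⟩ := hσ 0 t le_rfl ht
  rw [sub_zero, abs_of_nonneg ht] at hlow hupp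
  have := dist_triangle (σ t) (σ 0) p
  have := dist_triangle_right (σ t) (σ 0) p
  rw [abs_le]
  constructor <;> linarith

lemma le_gromovProduct (hσ : IsRoughGeodesicRay B σ) (p : X) {t t' : ℝ} (ht : 0 ≤ t)
    (htt' : t ≤ t') :
    t - dist (σ 0) p - 3 * B / 2 ≤ gromovProduct p (σ t) (σ t') := by
  have hD := abs_le.mp (hσ.abs_dist_sub_le p ht)
  have hD' := abs_le.mp (hσ.abs_dist_sub_le p (ht.trans htt'))
  have hσtt' := (hσ t t' ht (ht.trans htt')).2
  rw [abs_of_nonneg (sub_nonneg.mpr htt'), dist_comm] at hσtt'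
  unfold gromovProduct
  linarith [hD.1, hD'.1]

end IsRoughGeodesicRay

variable {δ B : ℝ} {γ σ : ℝ → X}

lemma exists_le_gromovProduct (hhyp : IsDeltaHyperbolic X δ) (hB : 0 ≤ B)
    (hσ : IsRoughGeodesicRay B σ) (hconv : TendstoBoundaryPoint γ σ) {t : ℝ} (ht : 0 ≤ t)
    (R : ℝ) :
    ∃ s ≥ R, t - dist (σ 0) (γ 0) - 3 * B / 2 - δ ≤ gromovProduct (γ 0) (σ t) (γ s) := by
  obtain ⟨T, hT⟩ := hconv (t + 1) (by linarith)
  refine ⟨max T R, le_max_right _ _, ?_⟩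
  have hnear := hσ.le_gromovProduct (γ 0) ht (le_max_right T t)
  have hfar := hT (max T R) (max T t) (le_max_left _ _) (le_max_left _ _)
  have hmin := hhyp (γ 0) (σ t) (γ (max T R)) (σ (max T t))
  have ha := dist_nonneg (x := σ 0) (y := γ 0)
  have hlow := le_min hnear
    ((show t - dist (σ 0) (γ 0) - 3 * B / 2 ≤ t + 1 by linarith).trans hfar)
  linarith

lemma dist_le_of_tendstoBoundaryPoint (hhyp : IsDeltaHyperbolic X δ) (hδ : 0 ≤ δ)
    (hγ : IsGeodesicRay γ) (hB : 0 ≤ B) (hσ : IsRoughGeodesicRay B σ)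
    (hconv : TendstoBoundaryPoint γ σ) {t : ℝ} (ht : 0 ≤ t) :
    dist (γ t) (σ t) ≤ 3 * dist (σ 0) (γ 0) + 4 * B + 4 * δ := by
  obtain ⟨s, hs, hgt⟩ := exists_le_gromovProduct hhyp hB hσ hconv ht (dist (σ t) (γ 0))
  set g := gromovProduct (γ 0) (σ t) (γ s)
  have hg : 0 ≤ g := gromovProduct_nonneg _ _ _
  have hgD : g ≤ dist (σ t) (γ 0) := gromovProduct_le_dist _ _ _
  have hσg := hγ.dist_le_of_le_gromovProduct hhyp (σ t) hg (hgD.trans hs) le_rfl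
  have hD := abs_le.mp (hσ.abs_dist_sub_le (γ 0) ht)
  have hγg : dist (γ t) (γ g) ≤ dist (σ 0) (γ 0) + 3 * B / 2 + δ := by
    rw [hγ t g ht hg, abs_le]
    constructor <;> linarith
  calc dist (γ t) (σ t) ≤ dist (γ t) (γ g) + dist (σ t) (γ g) := dist_triangle_right _ _ _
    _ ≤ 3 * dist (σ 0) (γ 0) + 4 * B + 4 * δ := by linarith

end

theorem quasigeodesic_shadows_geodesic_general {X : Type*} [MetricSpace X]
    (δ : ℝ) (hδ : 0 ≤ δ) (hhyp : IsDeltaHyperbolic X δ)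
    (γ σ : ℝ → X) (hγ : IsGeodesicRay γ) (B : ℝ) (hB : 0 ≤ B)
    (hσ : ∀ s t : ℝ, 0 ≤ s → 0 ≤ t →
      |t - s| - B ≤ dist (σ t) (σ s) ∧ dist (σ t) (σ s) ≤ |t - s| + B)
    (hconv : ∀ C > (0 : ℝ), ∃ T : ℝ, ∀ s t : ℝ, T ≤ s → T ≤ t →
      C ≤ gromovProduct (γ 0) (σ t) (γ s)) :
    ∃ M > (0 : ℝ), ∀ t : ℝ, 0 ≤ t → dist (γ t) (σ t) < M := by
  refine ⟨3 * dist (σ 0) (γ 0) + 4 * B + 4 * δ + 1, by positivity, fun t ht => ?_⟩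
  have := dist_le_of_tendstoBoundaryPoint hhyp hδ hγ hB hσ hconv ht
  linarith

/-- In a proper geodesic δ-hyperbolic space, a (1,B) quasi-geodesic
ray σ converging to the boundary point of a geodesic ray γ stays at bounded
distance from γ: there is M > 0 with d(γ t, σ t) < M for all t ≥ 0. -/
theorem quasigeodesic_shadows_geodesic {X : Type*} [MetricSpace X] [ProperSpace X]
    (hX : IsGeodesicSpace X)
    (δ : ℝ) (hδ : 0 ≤ δ) (hhyp : IsDeltaHyperbolic X δ)
    (γ σ : ℝ → X) (hγ : IsGeodesicRay γ) (B : ℝ) (hB : 0 ≤ B)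
    (hσ : ∀ s t : ℝ, 0 ≤ s → 0 ≤ t →
      |t - s| - B ≤ dist (σ t) (σ s) ∧ dist (σ t) (σ s) ≤ |t - s| + B)
    (hconv : ∀ C > (0 : ℝ), ∃ T : ℝ, ∀ s t : ℝ, T ≤ s → T ≤ t →
      C ≤ gromovProduct (γ 0) (σ t) (γ s)) :
    ∃ M > (0 : ℝ), ∀ t : ℝ, 0 ≤ t → dist (γ t) (σ t) < M :=
  quasigeodesic_shadows_geodesic_general δ hδ hhyp γ σ hγ B hB hσ hconv
end
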